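/- Let a(s) and b(s) be monic real Hurwitz stable polynomials of degree n, and c(s) a monic real polynomial of degree n-1 such that Re[c(jω)/a(jω)] > 0 and Re[c(jω)/b(jω)] > 0 for all real ω. Then for any monic real polynomial h(s) of degree n, there exists δ > 0 such that (c(s) + δ·h(s))/a(s) and (c(s) + δ·h(s))/b(s) are both strictly positive real. -/

import Mathlib

open Polynomial Complex

noncomputable def evalI (p : Polynomial ℝ) (ω : ℝ) : ℂ :=
  Polynomial.aeval ((ω : ℂ) * Complex.I) p

def HurwitzStable (p : Polynomial ℝ) : Prop :=
  ∀ z : ℂ, Polynomial.aeval z p = 0 → z.re < 0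

def SPR (p q : Polynomial ℝ) : Prop :=
  p.degree = q.degree ∧ HurwitzStable q ∧
    ∀ ω : ℝ, 0 < (evalI p ω / evalI q ω).re

open Filter Topology Bornology Asymptotics

/-! Put `f_δ = c + δ h`. On the imaginary axis `Re (f_δ / a) = Re (c / a) + δ Re (h / a)`, and since
`h` and `a` are monic of the same degree, `h (jω) / a (jω) → 1` as `|ω| → ∞`. Hence `Re (h / a) > 0`
outside a compact set `K`, while on `K` the term `Re (c / a)` has a positive minimum and `Re (h / a)`
is bounded below; so every small enough `δ > 0` works, for `a` and for `b` at once. -/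

theorem Polynomial.tendsto_eval_div_eval_cobounded {𝕜 : Type*} [NormedField 𝕜] {P Q : 𝕜[X]}
    (h : P.natDegree = Q.natDegree) :
    Tendsto (fun z => P.eval z / Q.eval z) (cobounded 𝕜)
      (𝓝 (P.leadingCoeff / Q.leadingCoeff)) := by
  have hmonomial : (fun z => P.leadingCoeff * z ^ P.natDegree / (Q.leadingCoeff * z ^ Q.natDegree))
      =ᶠ[cobounded 𝕜] fun _ => P.leadingCoeff / Q.leadingCoeff := by
    filter_upwards [eventually_ne_cobounded 0] with z hz
    rw [h, mul_div_mul_right _ _ (pow_ne_zero _ hz)]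
  exact (isEquivalent_cobounded_leading_monomial.div
    isEquivalent_cobounded_leading_monomial).symm.tendsto_nhds
    (tendsto_const_nhds.congr' hmonomial.symm)

theorem eventually_forall_pos_add_mul {X : Type*} [TopologicalSpace X] {f g : X → ℝ}
    (hf : Continuous f) (hg : Continuous g) (hf_pos : ∀ x, 0 < f x)
    (hg_pos : ∀ᶠ x in cocompact X, 0 < g x) :
    ∀ᶠ δ in 𝓝[>] (0 : ℝ), ∀ x, 0 < f x + δ * g x := by
  obtain ⟨K, hK, hgK⟩ := mem_cocompact.mp hg_pos
  obtain ⟨m, hm, hfm⟩ := hK.exists_forall_le' hf.continuousOn fun x _ => hf_pos x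
  obtain ⟨L, hL⟩ := hK.bddBelow_image hg.continuousOn
  filter_upwards [Ioo_mem_nhdsGT (show 0 < m / (|L| + 1) by positivity)] with δ ⟨hδ, hδm⟩ x
  by_cases hx : x ∈ K
  · have hLx : L ≤ g x := hL ⟨x, hx, rfl⟩
    have hδL : δ * (|L| + 1) < m := (lt_div_iff₀ (by positivity)).mp hδm
    nlinarith [hfm x hx, neg_abs_le L, abs_nonneg L]
  · have hgx : 0 < g x := hgK hx
    nlinarith [hf_pos x]

theorem continuous_evalI (p : ℝ[X]) : Continuous (evalI p) :=
  p.continuous_aeval.comp (continuous_ofReal.mul continuous_const)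

theorem HurwitzStable.evalI_ne_zero {q : ℝ[X]} (hq : HurwitzStable q) (ω : ℝ) :
    evalI q ω ≠ 0 := fun h0 => by
  simpa using hq _ h0

theorem evalI_eq_eval_map (p : ℝ[X]) (ω : ℝ) :
    evalI p ω = (p.map (algebraMap ℝ ℂ)).eval (ω * I) := by
  rw [evalI, aeval_def, eval₂_eq_eval_map]

theorem tendsto_evalI_div_evalI_cocompact {p q : ℝ[X]} (hp : p.Monic) (hq : q.Monic)
    (h : p.natDegree = q.natDegree) :
    Tendsto (fun ω => evalI p ω / evalI q ω) (cocompact ℝ) (𝓝 1) := by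
  have hI : Tendsto (fun ω : ℝ => (ω : ℂ) * I) (cocompact ℝ) (cobounded ℂ) := by
    rw [← tendsto_norm_atTop_iff_cobounded]
    simpa only [norm_mul, norm_real, norm_I, mul_one] using tendsto_norm_cocompact_atTop
  have hlim := (tendsto_eval_div_eval_cobounded (P := p.map (algebraMap ℝ ℂ))
    (Q := q.map (algebraMap ℝ ℂ)) (by simp [natDegree_map, h])).comp hI
  simp only [(hp.map _).leadingCoeff, (hq.map _).leadingCoeff, div_one] at hlim
  simpa only [evalI_eq_eval_map, Function.comp_def] using hlim

theorem evalI_add_C_mul_div_re (a c h : ℝ[X]) (δ ω : ℝ) :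
    (evalI (c + C δ * h) ω / evalI a ω).re =
      (evalI c ω / evalI a ω).re + δ * (evalI h ω / evalI a ω).re := by
  simp only [evalI, map_add, map_mul, aeval_C, Complex.coe_algebraMap, add_div, mul_div_assoc,
    add_re, re_ofReal_mul]

theorem eventually_SPR_add_C_mul {a c h : ℝ[X]} (ha : a.Monic) (haH : HurwitzStable a)
    (hh : h.Monic) (hha : h.natDegree = a.natDegree) (hch : c.degree < h.degree)
    (hpos : ∀ ω, 0 < (evalI c ω / evalI a ω).re) :
    ∀ᶠ δ in 𝓝[>] (0 : ℝ), SPR (c + C δ * h) a := by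
  have hcont : ∀ p : ℝ[X], Continuous fun ω => (evalI p ω / evalI a ω).re := fun p =>
    continuous_re.comp ((continuous_evalI p).div (continuous_evalI a) haH.evalI_ne_zero)
  have hh_pos : ∀ᶠ ω in cocompact ℝ, 0 < (evalI h ω / evalI a ω).re :=
    ((continuous_re.tendsto 1).comp
      (tendsto_evalI_div_evalI_cocompact hh ha hha)).eventually (lt_mem_nhds one_pos)
  filter_upwards [eventually_mem_nhdsWithin,
    eventually_forall_pos_add_mul (hcont c) (hcont h) hpos hh_pos] with δ hδ hδpos
  refine ⟨?_, haH, fun ω => evalI_add_C_mul_div_re a c h δ ω ▸ hδpos ω⟩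
  rw [degree_add_eq_right_of_degree_lt, degree_C_mul hδ.ne', degree_eq_natDegree hh.ne_zero, hha,
    degree_eq_natDegree ha.ne_zero]
  rwa [degree_C_mul hδ.ne']

theorem spr_perturbation_pair_general (n : ℕ) (hn : 1 ≤ n) (a b c h : Polynomial ℝ)
    (hamon : a.Monic) (hadeg : a.natDegree = n) (haH : HurwitzStable a)
    (hbmon : b.Monic) (hbdeg : b.natDegree = n) (hbH : HurwitzStable b)
    (hcdeg : c.natDegree = n - 1)
    (hposa : ∀ ω : ℝ, 0 < (evalI c ω / evalI a ω).re)
    (hposb : ∀ ω : ℝ, 0 < (evalI c ω / evalI b ω).re)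
    (hhmon : h.Monic) (hhdeg : h.natDegree = n) :
    ∃ δ > (0 : ℝ),
      SPR (c + Polynomial.C δ * h) a ∧ SPR (c + Polynomial.C δ * h) b := by
  have hch : c.degree < h.degree := by
    rw [degree_eq_natDegree hhmon.ne_zero, hhdeg]
    exact c.degree_le_natDegree.trans_lt (by exact_mod_cast (show c.natDegree < n by omega))
  exact (eventually_mem_nhdsWithin.and
    ((eventually_SPR_add_C_mul hamon haH hhmon (hhdeg.trans hadeg.symm) hch hposa).and
      (eventually_SPR_add_C_mul hbmon hbH hhmon (hhdeg.trans hbdeg.symm) hch hposb))).exists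

theorem spr_perturbation_pair (n : ℕ) (hn : 1 ≤ n) (a b c h : Polynomial ℝ)
    (hamon : a.Monic) (hadeg : a.natDegree = n) (haH : HurwitzStable a)
    (hbmon : b.Monic) (hbdeg : b.natDegree = n) (hbH : HurwitzStable b)
    (hcmon : c.Monic) (hcdeg : c.natDegree = n - 1)
    (hposa : ∀ ω : ℝ, 0 < (evalI c ω / evalI a ω).re)
    (hposb : ∀ ω : ℝ, 0 < (evalI c ω / evalI b ω).re)
    (hhmon : h.Monic) (hhdeg : h.natDegree = n) :
    ∃ δ > (0 : ℝ),
      SPR (c + Polynomial.C δ * h) a ∧ SPR (c + Polynomial.C δ * h) b :=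
  spr_perturbation_pair_general n hn a b c h hamon hadeg haH hbmon hbdeg hbH hcdeg hposa hposb hhmon
    hhdeg
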